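/- For every t ∈ (0,1): ∫₀^∞ t^{−3/2} · y² · exp(−y²/(2t)) · erf( y/√(2(1−t)) ) dy = √(2/π) · ( √(t(1−t)) + arcsin √t ), where erf(x) := (2/√π) ∫₀^x exp(−u²) du. (This is the first moment of Brownian meander of length 1 at time t, E B_t^{me}, computed from the meander's marginal density t^{−3/2} x e^{−x²/(2t)} erf(x/√(2(1−t))).) -/

import Mathlib

/-!
Writing `erf (b y) = (2/√π) ∫₀^b y e^{-s²y²} ds` and exchanging the order of integration turns
`∫₀^∞ y² e^{-c y²} erf (b y) dy` into `(2/√π) ∫₀^b ∫₀^∞ y³ e^{-(c+s²) y²} dy ds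
= (1/√π) ∫₀^b (c+s²)⁻² ds`, an elementary integral with an `arctan` in it. For
`c = 1/(2t)` and `b = 1/√(2(1-t))` the argument of that `arctan` is `√t/√(1-t)`, so it equals
`arcsin √t`.
-/

open MeasureTheory Real

/-- The error function `erf(x) = (2/√π) ∫₀^x e^{−u²} du`. -/
noncomputable def erf (x : ℝ) : ℝ :=
  2 / Real.sqrt π * ∫ u in (0 : ℝ)..x, Real.exp (-u ^ 2)

open Set

theorem integral_Ioi_pow_three_mul_exp_neg_mul_sq {k : ℝ} (hk : 0 < k) :
    ∫ y in Ioi (0 : ℝ), y ^ 3 * exp (-(k * y ^ 2)) = (2 * k ^ 2)⁻¹ := by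
  have h := integral_rpow_mul_exp_neg_mul_rpow two_pos (by norm_num : (-1 : ℝ) < 3) hk
  norm_num [Real.rpow_natCast, Gamma_two] at h
  rw [h]
  ring

theorem integrableOn_Ioi_pow_three_mul_exp_neg_mul_sq {k : ℝ} (hk : 0 < k) :
    IntegrableOn (fun y : ℝ => y ^ 3 * exp (-(k * y ^ 2))) (Ioi 0) := by
  have h := integrableOn_rpow_mul_exp_neg_mul_sq hk (s := 3) (by norm_num)
  norm_num [Real.rpow_natCast] at h
  exact h

theorem hasDerivAt_div_add_sq_add_arctan {c : ℝ} (hc : 0 < c) (s : ℝ) :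
    HasDerivAt (fun s => (2 * c)⁻¹ * (s / (c + s ^ 2) + arctan (s / √c) / √c))
      ((c + s ^ 2) ^ 2)⁻¹ s := by
  have hsc : 0 < √c := sqrt_pos.2 hc
  have hcs : √c ^ 2 = c := sq_sqrt hc.le
  have hne : c + s ^ 2 ≠ 0 := by positivity
  have hrat : HasDerivAt (fun s => s / (c + s ^ 2))
      ((1 * (c + s ^ 2) - s * (2 * s)) / (c + s ^ 2) ^ 2) s :=
    (hasDerivAt_id s).div (by simpa using (hasDerivAt_pow 2 s).const_add c) hne
  have harctan : HasDerivAt (fun s => arctan (s / √c)) (1 / (1 + (s / √c) ^ 2) * (1 / √c)) s :=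
    (hasDerivAt_arctan _).comp s ((hasDerivAt_id s).div_const √c)
  refine ((hrat.add (harctan.div_const √c)).const_mul (2 * c)⁻¹).congr_deriv ?_
  field_simp
  rw [hcs]
  ring

theorem integral_inv_add_sq_sq {c : ℝ} (hc : 0 < c) (b : ℝ) :
    ∫ s in (0 : ℝ)..b, ((c + s ^ 2) ^ 2)⁻¹ =
      (2 * c)⁻¹ * (b / (c + b ^ 2) + arctan (b / √c) / √c) := by
  have hcont : Continuous fun s : ℝ => ((c + s ^ 2) ^ 2)⁻¹ :=
    (by fun_prop : Continuous fun s : ℝ => (c + s ^ 2) ^ 2).inv₀ fun s => by positivity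
  rw [intervalIntegral.integral_eq_sub_of_hasDerivAt
    (fun s _ => hasDerivAt_div_add_sq_add_arctan hc s) (hcont.intervalIntegrable 0 b)]
  simp

theorem erf_mul (b y : ℝ) :
    erf (b * y) = 2 / √π * ∫ s in (0 : ℝ)..b, y * exp (-(s * y) ^ 2) := by
  rw [erf, intervalIntegral.integral_const_mul, ← smul_eq_mul (a := y),
    intervalIntegral.smul_integral_comp_mul_right (fun u => exp (-u ^ 2)), zero_mul]

theorem integrable_pow_three_mul_exp_neg_add_sq_mul_sq {c : ℝ} (hc : 0 < c) (ν : Measure ℝ)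
    [IsFiniteMeasure ν] :
    Integrable (fun p : ℝ × ℝ => p.2 ^ 3 * exp (-((c + p.1 ^ 2) * p.2 ^ 2)))
      (ν.prod (volume.restrict (Ioi 0))) := by
  have hdom : Integrable (fun p : ℝ × ℝ => 1 * (p.2 ^ 3 * exp (-(c * p.2 ^ 2))))
      (ν.prod (volume.restrict (Ioi 0))) :=
    (integrable_const 1).mul_prod (integrableOn_Ioi_pow_three_mul_exp_neg_mul_sq hc)
  refine hdom.mono' (by fun_prop) ?_
  rw [Measure.ae_prod_iff_ae_ae (by measurability)]
  refine .of_forall fun s => ?_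
  filter_upwards [ae_restrict_mem measurableSet_Ioi] with y (hy : 0 < y)
  rw [norm_of_nonneg (by positivity), one_mul]
  gcongr
  nlinarith [sq_nonneg s, sq_nonneg y]

theorem integral_sq_mul_exp_neg_mul_sq_mul_erf {c : ℝ} (hc : 0 < c) (b : ℝ) :
    ∫ y in Ioi (0 : ℝ), y ^ 2 * exp (-(c * y ^ 2)) * erf (b * y) =
      (√π)⁻¹ * ∫ s in (0 : ℝ)..b, ((c + s ^ 2) ^ 2)⁻¹ := by
  have hkernel : ∀ y s : ℝ, y ^ 2 * exp (-(c * y ^ 2)) * (2 / √π * (y * exp (-(s * y) ^ 2))) =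
      2 / √π * (y ^ 3 * exp (-((c + s ^ 2) * y ^ 2))) := fun y s => by
    rw [show -((c + s ^ 2) * y ^ 2) = -(c * y ^ 2) + -(s * y) ^ 2 by ring, exp_add]
    ring
  have : IsFiniteMeasure (volume.restrict (uIoc (0 : ℝ) b)) := isFiniteMeasure_restrict_Ioc _ _
  have hint : Integrable
      (Function.uncurry fun s y => 2 / √π * (y ^ 3 * exp (-((c + s ^ 2) * y ^ 2))))
      ((volume.restrict (uIoc 0 b)).prod (volume.restrict (Ioi 0))) :=
    (integrable_pow_three_mul_exp_neg_add_sq_mul_sq hc _).const_mul _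
  calc ∫ y in Ioi (0 : ℝ), y ^ 2 * exp (-(c * y ^ 2)) * erf (b * y)
      = ∫ y in Ioi (0 : ℝ), ∫ s in (0 : ℝ)..b,
          2 / √π * (y ^ 3 * exp (-((c + s ^ 2) * y ^ 2))) := by
        congr 1 with y
        simp only [erf_mul, ← hkernel, intervalIntegral.integral_const_mul]
    _ = ∫ s in (0 : ℝ)..b, ∫ y in Ioi (0 : ℝ),
          2 / √π * (y ^ 3 * exp (-((c + s ^ 2) * y ^ 2))) :=
        (intervalIntegral_integral_swap hint).symm
    _ = ∫ s in (0 : ℝ)..b, 2 / √π * (2 * (c + s ^ 2) ^ 2)⁻¹ := by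
        congr 1 with s
        rw [integral_const_mul, integral_Ioi_pow_three_mul_exp_neg_mul_sq (by positivity)]
    _ = (√π)⁻¹ * ∫ s in (0 : ℝ)..b, ((c + s ^ 2) ^ 2)⁻¹ := by
        rw [← intervalIntegral.integral_const_mul]
        congr 1 with s
        field_simp

theorem sq_rpow_neg_three_div_two {p : ℝ} (hp : 0 ≤ p) : (p ^ 2) ^ (-(3 : ℝ) / 2) = (p ^ 3)⁻¹ := by
  rw [← rpow_natCast, ← rpow_mul hp, show ((2 : ℕ) : ℝ) * (-3 / 2) = -(3 : ℕ) by norm_num,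
    rpow_neg hp, rpow_natCast]

/-- the first moment of Brownian meander of length 1 at time `t`,
computed from its marginal density:
`∫₀^∞ t^{−3/2} y² e^{−y²/(2t)} erf(y/√(2(1−t))) dy = √(2/π)(√(t(1−t)) + arcsin √t)`. -/
theorem meander_first_moment (t : ℝ) (ht : t ∈ Set.Ioo (0 : ℝ) 1) :
    ∫ y in Set.Ioi (0 : ℝ),
        t ^ (-(3 : ℝ) / 2) * y ^ 2 * Real.exp (-y ^ 2 / (2 * t)) *
          erf (y / Real.sqrt (2 * (1 - t))) =
      Real.sqrt (2 / π) * (Real.sqrt (t * (1 - t)) + Real.arcsin (Real.sqrt t)) := by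
  obtain ⟨p, hp, rfl⟩ : ∃ p, 0 < p ∧ t = p ^ 2 := ⟨√t, sqrt_pos.2 ht.1, (sq_sqrt ht.1.le).symm⟩
  have hp1 : p < 1 := by nlinarith [ht.2]
  set q := √(1 - p ^ 2) with hq_def
  have hq : 0 < q := sqrt_pos.2 (by nlinarith)
  have hq2 : q ^ 2 = 1 - p ^ 2 := sq_sqrt (by nlinarith)
  have hc : 0 < (2 * p ^ 2)⁻¹ := by positivity
  have hsqrt_c : √(2 * p ^ 2)⁻¹ = (√2 * p)⁻¹ := by
    rw [sqrt_inv, sqrt_mul zero_le_two, sqrt_sq hp.le]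
  have harcsin : arcsin p = arctan (p / q) := arcsin_eq_arctan ⟨by linarith, hp1⟩
  have hintegrand : ∀ y : ℝ, (p ^ 2) ^ (-(3 : ℝ) / 2) * y ^ 2 * exp (-y ^ 2 / (2 * p ^ 2)) *
      erf (y / √(2 * (1 - p ^ 2))) = (p ^ 3)⁻¹ *
        (y ^ 2 * exp (-((2 * p ^ 2)⁻¹ * y ^ 2)) * erf ((√2 * q)⁻¹ * y)) := fun y => by
    rw [sq_rpow_neg_three_div_two hp.le, hq_def, sqrt_mul zero_le_two, div_eq_inv_mul y]
    ring_nf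
  simp only [hintegrand, integral_const_mul, integral_sq_mul_exp_neg_mul_sq_mul_erf hc,
    integral_inv_add_sq_sq hc, hsqrt_c, sqrt_sq hp.le, sqrt_mul (sq_nonneg p), ← hq_def,
    harcsin, sqrt_div' 2 pi_pos.le]
  rw [show (√2 * q)⁻¹ / (√2 * p)⁻¹ = p / q by field_simp]
  field_simp
  rw [sq_sqrt zero_le_two, hq2]
  ring
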